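/- arXiv:1812.05873 — 3 statements merged into one kernel-verified Lean document; each statement's English description precedes it below -/
import Mathlib

section
/- Let I be a finite index set and l, r, c : I → ℝ≥0. If the three multisets {{ 2·l(i) + c(i) : i ∈ I }}, {{ 2·r(i) + c(i) : i ∈ I }}, and {{ l(i) + r(i) + c(i) : i ∈ I }} are pairwise equal as multisets, then l(i) = r(i) for every i ∈ I. -/
/-! Equal multisets have equal sums of squares. If the multisets of `a i`, of `b i` and of the
midpoints `(a i + b i) / 2` all agree, then `∑ (a i - b i)² = 2 ∑ a i² + 2 ∑ b i² - ∑ (a i + b i)²`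
vanishes, so `a = b`. Here `a = 2 l + c`, `b = 2 r + c`, and `l + r + c` is their midpoint. -/

open Finset

theorem Finset.sum_comp_eq_of_map_val_eq {ι α M : Type*} [AddCommMonoid M] {s : Finset ι}
    {f g : ι → α} (h : s.val.map f = s.val.map g) (φ : α → M) :
    ∑ i ∈ s, φ (f i) = ∑ i ∈ s, φ (g i) := by
  simpa only [sum_eq_multiset_sum, Multiset.map_map, Function.comp_def] using congrArg (fun m => (m.map φ).sum) h

theorem Finset.eq_of_map_val_eq_map_val_midpoint {ι : Type*} {s : Finset ι} {a b : ι → ℝ}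
    (ha : s.val.map a = s.val.map (fun i => (a i + b i) / 2))
    (hb : s.val.map b = s.val.map (fun i => (a i + b i) / 2)) :
    ∀ i ∈ s, a i = b i := by
  have hsq : ∑ i ∈ s, (a i - b i) ^ 2 = 0 :=
    calc ∑ i ∈ s, (a i - b i) ^ 2
        = 2 * ∑ i ∈ s, a i ^ 2 + 2 * ∑ i ∈ s, b i ^ 2
            - 4 * ∑ i ∈ s, ((a i + b i) / 2) ^ 2 := by
          simp only [mul_sum, ← sum_add_distrib, ← sum_sub_distrib]
          exact sum_congr rfl fun i _ => by ring
      _ = 0 := by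
          rw [sum_comp_eq_of_map_val_eq ha (· ^ 2), sum_comp_eq_of_map_val_eq hb (· ^ 2)]
          ring
  intro i hi
  have := (sum_eq_zero_iff_of_nonneg fun j _ => sq_nonneg (a j - b j)).mp hsq i hi
  exact sub_eq_zero.mp (pow_eq_zero_iff two_ne_zero |>.mp this)

theorem multiset_eq_implies_pointwise_eq_general {I : Type*} [Fintype I]
    (l r c : I → ℝ)
    (h2 : (Finset.univ.val.map (fun i : I => 2 * l i + c i)) =
          (Finset.univ.val.map (fun i : I => l i + r i + c i)))
    (h3 : (Finset.univ.val.map (fun i : I => 2 * r i + c i)) =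
          (Finset.univ.val.map (fun i : I => l i + r i + c i))) :
    ∀ i : I, l i = r i := by
  have hmid : (fun i => l i + r i + c i) = fun i => ((2 * l i + c i) + (2 * r i + c i)) / 2 := by
    funext i; ring
  rw [hmid] at h2 h3
  intro i
  have := eq_of_map_val_eq_map_val_midpoint h2 h3 i (mem_univ i)
  linarith

theorem multiset_eq_implies_pointwise_eq {I : Type*} [Fintype I]
    (l r c : I → ℝ) (hl : ∀ i, 0 ≤ l i) (hr : ∀ i, 0 ≤ r i) (hc : ∀ i, 0 ≤ c i)
    (h1 : (Finset.univ.val.map (fun i : I => 2 * l i + c i)) =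
          (Finset.univ.val.map (fun i : I => 2 * r i + c i)))
    (h2 : (Finset.univ.val.map (fun i : I => 2 * l i + c i)) =
          (Finset.univ.val.map (fun i : I => l i + r i + c i)))
    (h3 : (Finset.univ.val.map (fun i : I => 2 * r i + c i)) =
          (Finset.univ.val.map (fun i : I => l i + r i + c i))) :
    ∀ i : I, l i = r i :=
  multiset_eq_implies_pointwise_eq_general l r c h2 h3
end

section
/- Let p : A × B → ℝ≥0 be a weight function over finite sets with marginal m(a) = ∑_b p(a,b). Then p satisfies functional dependence of the second coordinate on the first (i.e., p(a,b) > 0 and p(a,b') > 0 imply b = b') if and only if for all a ∈ A and b ∈ B, p(a,b)·p(a,b) = p(a,b)·m(a). -/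
/-! The condition splits over the fibres `b ↦ p (a, b)`. In a fibre of nonnegative weights,
`p (a, b) = m a` holds exactly when every other weight vanishes, so `p (a, b)² = p (a, b) · m a`
says that a positive weight carries the whole fibre. -/

open Finset

section Fibre

variable {ι R : Type*} [Fintype ι] [Ring R] [LinearOrder R] [IsStrictOrderedRing R] {f : ι → R}

theorem apply_eq_sum_iff_of_nonneg (hf : ∀ i, 0 ≤ f i) (i : ι) :
    f i = ∑ j, f j ↔ ∀ j ≠ i, f j = 0 := by
  classical
  rw [← add_sum_erase univ f (mem_univ i), left_eq_add,
    sum_eq_zero_iff_of_nonneg fun j _ => hf j]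
  simp only [mem_erase, mem_univ, and_true]

theorem mul_self_eq_mul_sum_iff_of_nonneg (hf : ∀ i, 0 ≤ f i) (i : ι) :
    f i * f i = f i * ∑ j, f j ↔ (0 < f i → ∀ j ≠ i, f j = 0) := by
  rcases (hf i).eq_or_lt with hi | hi
  · simp [← hi]
  · rw [mul_right_inj' hi.ne', apply_eq_sum_iff_of_nonneg hf]
    exact ⟨fun h _ => h, fun h => h hi⟩

theorem pos_subsingleton_iff_mul_self_eq_mul_sum (hf : ∀ i, 0 ≤ f i) :
    (∀ i j, 0 < f i → 0 < f j → i = j) ↔ ∀ i, f i * f i = f i * ∑ j, f j := by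
  simp only [mul_self_eq_mul_sum_iff_of_nonneg hf]
  constructor
  · intro h i hi j hji
    by_contra hj
    exact hji (h j i ((hf j).lt_of_ne' hj) hi)
  · intro h i j hi hj
    by_contra hij
    exact hj.ne' (h i hi j (Ne.symm hij))

end Fibre

theorem dep_iff_self_independence_general {A B : Type*} [Fintype B]
    (p : A × B → ℝ) (hp : ∀ x, 0 ≤ p x) :
    (∀ (a : A) (b b' : B), 0 < p (a, b) → 0 < p (a, b') → b = b') ↔
    (∀ (a : A) (b : B), p (a, b) * p (a, b) = p (a, b) * ∑ b', p (a, b')) :=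
  forall_congr' fun a => pos_subsingleton_iff_mul_self_eq_mul_sum fun b => hp (a, b)

theorem dep_iff_self_independence {A B : Type*} [Fintype A] [Fintype B]
    (p : A × B → ℝ) (hp : ∀ x, 0 ≤ p x) :
    (∀ (a : A) (b b' : B), 0 < p (a, b) → 0 < p (a, b') → b = b') ↔
    (∀ (a : A) (b : B), p (a, b) * p (a, b) = p (a, b) * ∑ b', p (a, b')) :=
  dep_iff_self_independence_general p hp
end

section
/- Let p : A × B → ℝ≥0 be a weight function over finite sets with marginal m(a) = ∑_b p(a,b). Then the multiset of positive values {{ p(a,b) : p(a,b) > 0 }} equals the multiset of positive values {{ m(a) : m(a) > 0 }} if and only if p satisfies functional dependence of the second coordinate on the first (p(a,b) > 0 and p(a,b') > 0 imply b = b'). -/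
/-! The projection `(a, b) ↦ a` maps the pairs of positive weight onto the rows of positive
marginal, and functional dependence says exactly that it is injective there. Equal multisets
have equal cardinalities, which forces injectivity; conversely, under injectivity each positive
weight `p (a, b)` is the only nonzero term of its row, so it equals the marginal `m a`. -/

open Finset

section Weights

variable {α β R : Type*} [Fintype β] [AddCommMonoid R] [PartialOrder R] {p : α × β → R}

theorem sum_snd_pos_iff_exists_pos [AddLeftMono R] (hp : ∀ x, 0 ≤ p x) (a : α) :
    0 < ∑ b, p (a, b) ↔ ∃ b, 0 < p (a, b) := by
  simpa using Finset.sum_pos_iff_of_nonneg (s := univ) fun b _ => hp (a, b)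

theorem sum_snd_eq_of_functional (hp : ∀ x, 0 ≤ p x)
    (hdep : ∀ (a : α) (b b' : β), 0 < p (a, b) → 0 < p (a, b') → b = b')
    {a : α} {b : β} (hab : 0 < p (a, b)) : ∑ b', p (a, b') = p (a, b) :=
  Finset.sum_eq_single_of_mem b (mem_univ b) fun b' _ hb' =>
    ((hp _).eq_of_not_lt fun h => hb' (hdep a b' b h hab)).symm

theorem image_fst_filter_pos [Fintype α] [DecidableEq α] [AddLeftMono R] [DecidableLT R]
    (hp : ∀ x, 0 ≤ p x) :
    (univ.filter fun ab : α × β => 0 < p ab).image Prod.fst =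
      univ.filter fun a => 0 < ∑ b, p (a, b) := by
  ext a
  simp [sum_snd_pos_iff_exists_pos hp]

end Weights

theorem Set.injOn_fst_iff {α β : Type*} {s : Set (α × β)} :
    s.InjOn Prod.fst ↔ ∀ (a : α) (b b' : β), (a, b) ∈ s → (a, b') ∈ s → b = b' := by
  constructor
  · intro h a b b' hb hb'
    exact congrArg Prod.snd (h hb hb' rfl)
  · rintro h ⟨a, b⟩ hb ⟨_, b'⟩ hb' rfl
    rw [h a b b' hb hb']

theorem multiset_eq_iff_dep_general {A B : Type*} [Fintype A] [Fintype B]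
    [DecidableEq A]
    (p : A × B → ℝ) (hp : ∀ x, 0 ≤ p x) :
    ((Finset.univ.filter (fun ab : A × B => 0 < p ab)).val.map p =
      (Finset.univ.filter (fun a : A => 0 < ∑ b, p (a, b))).val.map
        (fun a => ∑ b, p (a, b))) ↔
    (∀ (a : A) (b b' : B), 0 < p (a, b) → 0 < p (a, b') → b = b') := by
  set S := univ.filter fun ab : A × B => 0 < p ab
  have himage : S.image Prod.fst = univ.filter fun a => 0 < ∑ b, p (a, b) :=
    image_fst_filter_pos hp
  have hdep_iff : (∀ (a : A) (b b' : B), 0 < p (a, b) → 0 < p (a, b') → b = b') ↔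
      Set.InjOn Prod.fst (S : Set (A × B)) := by
    simp [S, Set.injOn_fst_iff]
  rw [hdep_iff, ← himage]
  constructor
  · intro h
    rw [← card_image_iff]
    have hcard := congrArg Multiset.card h.symm
    rwa [Multiset.card_map, Multiset.card_map] at hcard
  · intro hinj
    rw [image_val_of_injOn hinj, Multiset.map_map]
    refine Multiset.map_congr rfl fun ab hab => ?_
    exact (sum_snd_eq_of_functional hp (hdep_iff.2 hinj) (mem_filter.1 hab).2).symm

theorem multiset_eq_iff_dep {A B : Type*} [Fintype A] [Fintype B]
    [DecidableEq A] [DecidableEq B]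
    (p : A × B → ℝ) (hp : ∀ x, 0 ≤ p x) :
    ((Finset.univ.filter (fun ab : A × B => 0 < p ab)).val.map p =
      (Finset.univ.filter (fun a : A => 0 < ∑ b, p (a, b))).val.map
        (fun a => ∑ b, p (a, b))) ↔
    (∀ (a : A) (b b' : B), 0 < p (a, b) → 0 < p (a, b') → b = b') :=
  multiset_eq_iff_dep_general p hp
end
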